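/- (Miller–Clifford) Let S be a semigroup and s, t, u ∈ S with s L t and t R u. Then the H-class of t is a group (i.e., a subgroup of S) if and only if s R su and su L u. -/

import Mathlib

/-- Green's quasi-order ≤_R : s ≤_R t iff sS¹ ⊆ tS¹, i.e. s ∈ tS¹. -/
def leR {S : Type*} [Semigroup S] (s t : S) : Prop := s = t ∨ ∃ x, s = t * x

/-- Green's quasi-order ≤_L : s ≤_L t iff S¹s ⊆ S¹t, i.e. s ∈ S¹t. -/
def leL {S : Type*} [Semigroup S] (s t : S) : Prop := s = t ∨ ∃ x, s = x * t

/-- Green's quasi-order ≤_J : s ≤_J t iff S¹sS¹ ⊆ S¹tS¹, i.e. s ∈ S¹tS¹. -/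
def leJ {S : Type*} [Semigroup S] (s t : S) : Prop :=
  s = t ∨ (∃ x, s = x * t) ∨ (∃ y, s = t * y) ∨ ∃ x y, s = x * t * y

/-- Green's equivalence R. -/
def eqR {S : Type*} [Semigroup S] (s t : S) : Prop := leR s t ∧ leR t s

/-- Green's equivalence L. -/
def eqL {S : Type*} [Semigroup S] (s t : S) : Prop := leL s t ∧ leL t s

/-- Green's equivalence J. -/
def eqJ {S : Type*} [Semigroup S] (s t : S) : Prop := leJ s t ∧ leJ t s

/-!
If `e` is an idempotent of `H_t`, then `e` is a left identity on its `R`-class and a right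
identity on its `L`-class, so `s = s e ≤_R s u` and `u = e u ≤_L s u`. Conversely, from
`s = s u w` and `u = v s u` (with `v, w ∈ S¹`) the element `e = u w` equals `v s`, which makes it
idempotent and places it in `L_s ∩ R_u = L_t ∩ R_t`.
-/

section

variable {S : Type*} [Semigroup S] {a b c e : S}

theorem leR_iff_exists_withOne : leR a b ↔ ∃ x : WithOne S, (a : WithOne S) = b * x := by
  constructor
  · rintro (rfl | ⟨x, rfl⟩)
    · exact ⟨1, (mul_one _).symm⟩
    · exact ⟨x, WithOne.coe_mul b x⟩
  · rintro ⟨x, hx⟩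
    induction x using WithOne.recOneCoe with
    | one => exact Or.inl (WithOne.coe_inj.mp (by simpa using hx))
    | coe x => exact Or.inr ⟨x, WithOne.coe_inj.mp hx⟩

theorem leL_iff_exists_withOne : leL a b ↔ ∃ x : WithOne S, (a : WithOne S) = x * b := by
  constructor
  · rintro (rfl | ⟨x, rfl⟩)
    · exact ⟨1, (one_mul _).symm⟩
    · exact ⟨x, WithOne.coe_mul x b⟩
  · rintro ⟨x, hx⟩
    induction x using WithOne.recOneCoe with
    | one => exact Or.inl (WithOne.coe_inj.mp (by simpa using hx))
    | coe x => exact Or.inr ⟨x, WithOne.coe_inj.mp hx⟩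

theorem leR_mul_right (a x : S) : leR (a * x) a := Or.inr ⟨x, rfl⟩

theorem leL_mul_left (x a : S) : leL (x * a) a := Or.inr ⟨x, rfl⟩

theorem leR.trans (hab : leR a b) (hbc : leR b c) : leR a c := by
  rcases hab with rfl | ⟨x, rfl⟩
  · exact hbc
  rcases hbc with rfl | ⟨y, rfl⟩
  · exact leR_mul_right _ x
  · exact Or.inr ⟨y * x, mul_assoc c y x⟩

theorem leL.trans (hab : leL a b) (hbc : leL b c) : leL a c := by
  rcases hab with rfl | ⟨x, rfl⟩
  · exact hbc
  rcases hbc with rfl | ⟨y, rfl⟩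
  · exact leL_mul_left x _
  · exact Or.inr ⟨x * y, (mul_assoc x y c).symm⟩

theorem eqR.symm (h : eqR a b) : eqR b a := ⟨h.2, h.1⟩

theorem eqL.symm (h : eqL a b) : eqL b a := ⟨h.2, h.1⟩

theorem eqR.trans (hab : eqR a b) (hbc : eqR b c) : eqR a c :=
  ⟨hab.1.trans hbc.1, hbc.2.trans hab.2⟩

theorem eqL.trans (hab : eqL a b) (hbc : eqL b c) : eqL a c :=
  ⟨hab.1.trans hbc.1, hbc.2.trans hab.2⟩

theorem leR.mul_left (h : leR a b) (c : S) : leR (c * a) (c * b) := by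
  rcases h with rfl | ⟨x, rfl⟩
  · exact Or.inl rfl
  · exact Or.inr ⟨x, (mul_assoc c b x).symm⟩

theorem leL.mul_right (h : leL a b) (c : S) : leL (a * c) (b * c) := by
  rcases h with rfl | ⟨x, rfl⟩
  · exact Or.inl rfl
  · exact Or.inr ⟨x, mul_assoc x b c⟩

theorem leR.idempotent_mul (he : e * e = e) (h : leR a e) : e * a = a := by
  rcases h with rfl | ⟨x, rfl⟩
  · exact he
  · rw [← mul_assoc, he]

theorem leL.mul_idempotent (he : e * e = e) (h : leL a e) : a * e = a := by
  rcases h with rfl | ⟨x, rfl⟩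
  · exact he
  · rw [mul_assoc, he]

theorem eqR_mul_and_eqL_mul_of_idempotent {s u : S} (hse : eqL s e) (heu : eqR e u)
    (he : e * e = e) : eqR s (s * u) ∧ eqL (s * u) u := by
  have hs : s * e = s := hse.1.mul_idempotent he
  have hu : e * u = u := heu.2.idempotent_mul he
  refine ⟨⟨?_, leR_mul_right s u⟩, ⟨leL_mul_left s u, ?_⟩⟩
  · simpa only [hs] using heu.1.mul_left s
  · simpa only [hu] using hse.2.mul_right u

theorem exists_idempotent_eqL_eqR_of_leR_of_leL {s u : S} (hs : leR s (s * u))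
    (hu : leL u (s * u)) : ∃ e : S, eqL e s ∧ eqR e u ∧ e * e = e := by
  obtain ⟨w, hw⟩ := leR_iff_exists_withOne.mp hs
  obtain ⟨v, hv⟩ := leL_iff_exists_withOne.mp hu
  rw [WithOne.coe_mul] at hw hv
  obtain ⟨e, he⟩ : ∃ e : S, (e : WithOne S) = u * w := by
    induction w using WithOne.recOneCoe with
    | one => exact ⟨u, (mul_one _).symm⟩
    | coe w => exact ⟨u * w, WithOne.coe_mul u w⟩
  have hse : (s : WithOne S) * e = s := by rw [he, ← mul_assoc, ← hw]
  have he' : (e : WithOne S) = v * s := by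
    rw [he, hv, mul_assoc, mul_assoc, ← mul_assoc (s : WithOne S), ← hw]
  have heu : (e : WithOne S) * u = u := by rw [he', mul_assoc, ← hv]
  have hee : (e : WithOne S) * e = e := by
    nth_rewrite 1 [he']
    rw [mul_assoc, hse, he']
  norm_cast at hse heu hee
  refine ⟨e, ⟨leL_iff_exists_withOne.mpr ⟨v, he'⟩, hse ▸ leL_mul_left s e⟩,
    ⟨leR_iff_exists_withOne.mpr ⟨w, he⟩, heu ▸ leR_mul_right e u⟩, hee⟩

end

theorem stmt_4 {S : Type*} [Semigroup S] (s t u : S)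
    (hst : eqL s t) (htu : eqR t u) :
    (∃ e : S, eqR e t ∧ eqL e t ∧ e * e = e) ↔
      (eqR s (s * u) ∧ eqL (s * u) u) := by
  constructor
  · rintro ⟨e, het, het', he⟩
    exact eqR_mul_and_eqL_mul_of_idempotent (hst.trans het'.symm) (het.trans htu) he
  · rintro ⟨hs, hu⟩
    obtain ⟨e, hes, heu, he⟩ := exists_idempotent_eqL_eqR_of_leR_of_leL hs.1 hu.2
    exact ⟨e, heu.trans htu.symm, hes.trans hst, he⟩
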